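/- Let 𝒯* ⊆ 𝒯 be an optimal r-test set with m* = |𝒯*| ≥ 1 and let #₀ = r·n(n−1)/2. Then any run of SGA returns an r-test set of size at most (ln #₀ − ln m* + 1)·m*. -/

import Mathlib

open Finset

/-- The set of item pairs: 2-element subsets of the item set `S` (here the whole type `α`). -/
def itemPairs (α : Type*) [Fintype α] [DecidableEq α] : Finset (Finset α) :=
  Finset.univ.filter fun a => a.card = 2

/-- `⊥(a, F)`: the number of tests in the family `F` that differentiate the item pair `a`,
i.e. the tests `T` with `|T ∩ a| = 1`. -/
def diffBy {α : Type*} [DecidableEq α] (a : Finset α) (F : Finset (Finset α)) : ℕ :=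
  (F.filter fun T => (T ∩ a).card = 1).card

/-- `F` is an `r`-test set for the collection `𝒯`: `F ⊆ 𝒯` and every item pair is
differentiated by at least `r` tests of `F`. -/
def IsRTestSet {α : Type*} [Fintype α] [DecidableEq α]
    (r : ℕ) (𝒯 F : Finset (Finset α)) : Prop :=
  F ⊆ 𝒯 ∧ ∀ a ∈ itemPairs α, r ≤ diffBy a F

/-- The differentiation measure `#(T̄) = ∑_a max (r - ⊥(a,T̄), 0)` (truncated subtraction). -/
def dmeasure {α : Type*} [Fintype α] [DecidableEq α]
    (r : ℕ) (F : Finset (Finset α)) : ℕ :=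
  ∑ a ∈ itemPairs α, (r - diffBy a F)

/-- A run of the set cover greedy algorithm SGA: a sequence of distinct tests from `𝒯`,
each chosen greedily to minimize the differentiation measure of the selected family,
selections continue while the measure is positive, and the final measure is `0`. -/
structure SGARun {α : Type*} [Fintype α] [DecidableEq α]
    (r : ℕ) (𝒯 : Finset (Finset α)) (L : List (Finset α)) : Prop where
  nodup : L.Nodup
  mem : ∀ T ∈ L, T ∈ 𝒯
  greedy : ∀ i : Fin L.length, ∀ T ∈ 𝒯, T ∉ (L.take i).toFinset →
      dmeasure r (insert (L.get i) (L.take i).toFinset) ≤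
        dmeasure r (insert T (L.take i).toFinset)
  pos : ∀ i < L.length, 0 < dmeasure r (L.take i).toFinset
  done : dmeasure r L.toFinset = 0

/-! Write `m = |𝒯*|`. If `#(G) > 0`, the tests of `𝒯*` missing from `G` together make up every
remaining deficit, so their gains sum to at least `#(G)` and the best of them leaves measure at
most `(1 - 1/m) #(G)`; the greedy choice does at least as well. Hence after `i` steps the measure
is at most `#₀ (1 - 1/m)^i ≤ #₀ e^{-i/m}`. It also drops by at least one per step and stays
positive until the end, so for a run of length `k` (and `k ≥ m` by optimality) the measure after
`k - m` steps is still at least `m`, whence `k - m ≤ m (ln #₀ - ln m)`. -/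

section Decay

lemma sub_le_of_forall_lt_succ {D : ℕ → ℕ} {k : ℕ} (h : ∀ i < k, D (i + 1) < D i) :
    ∀ i ≤ k, k - i ≤ D i := by
  intro i hi
  induction hi using Nat.decreasingInduction with
  | self => simp
  | of_succ i hik ih => have := h i hik; omega

variable {D : ℕ → ℕ} {m k : ℕ}

lemma cast_le_mul_pow_of_mul_le (hm : 0 < m) (h : ∀ i < k, m * D (i + 1) ≤ (m - 1) * D i) :
    ∀ i ≤ k, (D i : ℝ) ≤ D 0 * (1 - 1 / m) ^ i := by
  have hmR : (0 : ℝ) < m := by exact_mod_cast hm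
  have hq : (0 : ℝ) ≤ 1 - 1 / m := by
    rw [sub_nonneg, div_le_one hmR]; exact_mod_cast hm
  intro i hi
  induction i with
  | zero => simp
  | succ i ih =>
    have hstep : (m : ℝ) * D (i + 1) ≤ (m - 1) * D i := by
      have : (m : ℝ) * D (i + 1) ≤ ((m - 1 : ℕ) : ℝ) * D i := by
        exact_mod_cast h i (by omega)
      rwa [Nat.cast_sub hm, Nat.cast_one] at this
    calc (D (i + 1) : ℝ) ≤ (1 - 1 / m) * D i := by
          rw [one_sub_div hmR.ne', div_mul_eq_mul_div, le_div_iff₀ hmR]; linarith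
      _ ≤ (1 - 1 / m) * (D 0 * (1 - 1 / m) ^ i) := by gcongr; exact ih (by omega)
      _ = D 0 * (1 - 1 / m) ^ (i + 1) := by ring

theorem length_le_of_mul_le (hm : 0 < m) (hmk : m ≤ k) (hpos : ∀ i < k, 0 < D i)
    (h : ∀ i < k, m * D (i + 1) ≤ (m - 1) * D i) :
    (k : ℝ) ≤ (Real.log (D 0) - Real.log m + 1) * m := by
  have hmR : (0 : ℝ) < m := by exact_mod_cast hm
  have hstrict : ∀ i < k, D (i + 1) < D i := fun i hi => by
    by_contra! hc
    have := h i hi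
    have := Nat.mul_le_mul_left m hc
    have : (m - 1) * D i < m * D i :=
      Nat.mul_lt_mul_of_pos_right (Nat.sub_lt hm one_pos) (hpos i hi)
    linarith
  set i := k - m
  have hm_le : (m : ℝ) ≤ D i := by
    have := sub_le_of_forall_lt_succ hstrict i (Nat.sub_le k m)
    rw [Nat.sub_sub_self hmk] at this
    exact_mod_cast this
  have hexp : (m : ℝ) ≤ D 0 * Real.exp (-(i / m)) := by
    calc (m : ℝ) ≤ D i := hm_le
      _ ≤ D 0 * (1 - 1 / m) ^ i := cast_le_mul_pow_of_mul_le hm h i (Nat.sub_le k m)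
      _ ≤ D 0 * Real.exp (-(1 / m)) ^ i := by
          gcongr
          · rw [sub_nonneg, div_le_one hmR]; exact_mod_cast hm
          · exact Real.one_sub_le_exp_neg _
      _ = D 0 * Real.exp (-(i / m)) := by rw [← Real.exp_nat_mul]; ring_nf
  have hD0 : (0 : ℝ) < D 0 := by exact_mod_cast hpos 0 (by omega)
  have hlog : Real.log m ≤ Real.log (D 0) - i / m := by
    have := Real.log_le_log hmR hexp
    rwa [Real.log_mul hD0.ne' (Real.exp_pos _).ne', Real.log_exp, ← sub_eq_add_neg] at this
  have hi : (i : ℝ) ≤ (Real.log (D 0) - Real.log m) * m := by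
    rw [← div_le_iff₀ hmR]; linarith
  have hk : (k : ℝ) = i + m := by rw [← Nat.cast_add, Nat.sub_add_cancel hmk]
  rw [hk]; linarith

end Decay

section TestSets

variable {α : Type*} [DecidableEq α]

lemma diffBy_mono (a : Finset α) {F F' : Finset (Finset α)} (h : F ⊆ F') :
    diffBy a F ≤ diffBy a F' :=
  card_le_card (filter_subset_filter _ h)

lemma diffBy_union_le (a : Finset α) (F F' : Finset (Finset α)) :
    diffBy a (F ∪ F') ≤ diffBy a F + diffBy a F' := by
  unfold diffBy
  rw [filter_union]
  exact card_union_le _ _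

lemma diffBy_eq_sum (a : Finset α) (F : Finset (Finset α)) :
    diffBy a F = ∑ T ∈ F, if (T ∩ a).card = 1 then 1 else 0 :=
  card_filter _ _

lemma diffBy_insert {T : Finset α} {F : Finset (Finset α)} (hT : T ∉ F) (a : Finset α) :
    diffBy a (insert T F) = diffBy a F + if (T ∩ a).card = 1 then 1 else 0 := by
  rw [diffBy_eq_sum, diffBy_eq_sum, sum_insert hT, add_comm]

lemma sum_tsub_add_le_card_mul {ι : Type*} (s : Finset ι) (c : ι → ℕ) (hc : ∀ i, c i ≤ 1)
    {x : ℕ} (hx : x ≤ ∑ i ∈ s, c i) : ∑ i ∈ s, (x - c i) + x ≤ s.card * x := by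
  rcases Nat.eq_zero_or_pos x with rfl | hx0
  · simp
  have : ∑ i ∈ s, (x - c i) + ∑ i ∈ s, c i = s.card * x := by
    rw [← sum_add_distrib, sum_congr rfl fun i _ => Nat.sub_add_cancel ((hc i).trans hx0),
      sum_const, smul_eq_mul]
  omega

variable [Fintype α]

lemma card_itemPairs : (itemPairs α).card = (Fintype.card α).choose 2 := by
  rw [itemPairs, ← powerset_univ, ← powersetCard_eq_filter, card_powersetCard, card_univ]

lemma dmeasure_empty (r : ℕ) :
    dmeasure r (∅ : Finset (Finset α)) = r * (itemPairs α).card := by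
  simp [dmeasure, diffBy, mul_comm]

-- Equivalently: the gains `#G - #(G ∪ {T})` of the tests `T ∈ F \ G` add up to at least `#G`.
lemma sum_dmeasure_insert_add_le {r : ℕ} {F G : Finset (Finset α)}
    (hF : ∀ a ∈ itemPairs α, r ≤ diffBy a F) :
    ∑ T ∈ F \ G, dmeasure r (insert T G) + dmeasure r G ≤ (F \ G).card * dmeasure r G := by
  have hdeficit : ∀ a ∈ itemPairs α, r - diffBy a G ≤ diffBy a (F \ G) := fun a ha => by
    have := diffBy_mono a (F := F) (F' := F \ G ∪ G)
      (by rw [sdiff_union_self_eq_union]; exact subset_union_left)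
    have := diffBy_union_le a (F \ G) G
    have := hF a ha
    omega
  have hinsert : ∀ T ∈ F \ G, dmeasure r (insert T G) =
      ∑ a ∈ itemPairs α, ((r - diffBy a G) - if (T ∩ a).card = 1 then 1 else 0) :=
    fun T hT => sum_congr rfl fun a _ => by rw [diffBy_insert (mem_sdiff.mp hT).2]; omega
  calc ∑ T ∈ F \ G, dmeasure r (insert T G) + dmeasure r G
      = ∑ a ∈ itemPairs α,
          (∑ T ∈ F \ G, ((r - diffBy a G) - if (T ∩ a).card = 1 then 1 else 0)
            + (r - diffBy a G)) := by
        rw [sum_congr rfl hinsert, sum_comm, dmeasure, ← sum_add_distrib]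
    _ ≤ ∑ a ∈ itemPairs α, (F \ G).card * (r - diffBy a G) :=
        sum_le_sum fun a ha => sum_tsub_add_le_card_mul _ _ (fun T => by split <;> omega)
          (diffBy_eq_sum a _ ▸ hdeficit a ha)
    _ = (F \ G).card * dmeasure r G := by rw [dmeasure, mul_sum]

lemma exists_mem_mul_dmeasure_insert_le {r : ℕ} {F G : Finset (Finset α)}
    (hF : ∀ a ∈ itemPairs α, r ≤ diffBy a F) (hG : 0 < dmeasure r G) :
    ∃ T ∈ F, T ∉ G ∧ F.card * dmeasure r (insert T G) ≤ (F.card - 1) * dmeasure r G := by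
  have hsum := sum_dmeasure_insert_add_le (G := G) hF
  have hne : (F \ G).Nonempty := by
    by_contra! he
    rw [he] at hsum
    simp only [sum_empty, zero_add, card_empty, zero_mul, nonpos_iff_eq_zero] at hsum
    omega
  obtain ⟨T, hT, hmin⟩ := exists_min_image (F \ G) (fun T => dmeasure r (insert T G)) hne
  refine ⟨T, (mem_sdiff.mp hT).1, (mem_sdiff.mp hT).2, ?_⟩
  have hle := card_nsmul_le_sum (F \ G) (fun T => dmeasure r (insert T G)) _ hmin
  have hs : (F \ G).card ≤ F.card := card_le_card sdiff_subset
  have hs0 : 0 < (F \ G).card := hne.card_pos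
  rw [smul_eq_mul] at hle
  zify [hs0.trans_le hs] at hle hsum hs ⊢
  nlinarith

lemma List.toFinset_take_succ {β : Type*} [DecidableEq β] (L : List β) {i : ℕ}
    (hi : i < L.length) : (L.take (i + 1)).toFinset = insert L[i] (L.take i).toFinset := by
  rw [List.take_add_one, List.getElem?_eq_getElem hi, Option.toList_some, List.toFinset_append,
    union_comm]
  rfl

namespace SGARun

variable {r : ℕ} {𝒯 : Finset (Finset α)} {L : List (Finset α)}

lemma isRTestSet (hrun : SGARun r 𝒯 L) : IsRTestSet r 𝒯 L.toFinset := by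
  refine ⟨fun T hT => hrun.mem T (List.mem_toFinset.mp hT), fun a ha => ?_⟩
  have := (sum_eq_zero_iff.mp hrun.done) a ha
  omega

lemma mul_dmeasure_take_succ_le (hrun : SGARun r 𝒯 L) {F : Finset (Finset α)}
    (hF : IsRTestSet r 𝒯 F) {i : ℕ} (hi : i < L.length) :
    F.card * dmeasure r (L.take (i + 1)).toFinset ≤
      (F.card - 1) * dmeasure r (L.take i).toFinset := by
  obtain ⟨T, hTF, hTG, hT⟩ := exists_mem_mul_dmeasure_insert_le hF.2 (hrun.pos i hi)
  rw [L.toFinset_take_succ hi]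
  exact (Nat.mul_le_mul_left _ (hrun.greedy ⟨i, hi⟩ T (hF.1 hTF) hTG)).trans hT

end SGARun

end TestSets

theorem stmt_10_general {α : Type*} [Fintype α] [DecidableEq α]
    (r : ℕ)
    (𝒯 Fstar : Finset (Finset α)) (hFstar : IsRTestSet r 𝒯 Fstar)
    (hopt : ∀ F : Finset (Finset α), IsRTestSet r 𝒯 F → Fstar.card ≤ F.card)
    (hm : 1 ≤ Fstar.card)
    (N0 : ℝ)
    (hN0 : N0 = (r : ℝ) * (Fintype.card α) * ((Fintype.card α : ℝ) - 1) / 2)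
    (L : List (Finset α)) (hrun : SGARun r 𝒯 L) :
    (L.length : ℝ) ≤
      (Real.log N0 - Real.log (Fstar.card : ℝ) + 1) * (Fstar.card : ℝ) := by
  have hmk : Fstar.card ≤ L.length :=
    List.toFinset_card_of_nodup hrun.nodup ▸ hopt _ hrun.isRTestSet
  have hD0 : (dmeasure r (L.take 0).toFinset : ℝ) = N0 := by
    rw [List.take_zero, List.toFinset_nil, dmeasure_empty, card_itemPairs, hN0]
    push_cast [Nat.cast_choose_two]
    ring
  have := length_le_of_mul_le hm hmk hrun.pos
    (fun i hi => hrun.mul_dmeasure_take_succ_le hFstar hi)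
  rwa [hD0] at this

/-- any run of SGA returns an `r`-test set of size at most
`(ln #₀ − ln m* + 1)·m*`. -/
theorem stmt_10 {α : Type*} [Fintype α] [DecidableEq α]
    (r : ℕ) (hr : 1 ≤ r) (hn : 2 ≤ Fintype.card α)
    (𝒯 Fstar : Finset (Finset α)) (hFstar : IsRTestSet r 𝒯 Fstar)
    (hopt : ∀ F : Finset (Finset α), IsRTestSet r 𝒯 F → Fstar.card ≤ F.card)
    (hm : 1 ≤ Fstar.card)
    (N0 : ℝ)
    (hN0 : N0 = (r : ℝ) * (Fintype.card α) * ((Fintype.card α : ℝ) - 1) / 2)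
    (L : List (Finset α)) (hrun : SGARun r 𝒯 L) :
    (L.length : ℝ) ≤
      (Real.log N0 - Real.log (Fstar.card : ℝ) + 1) * (Fstar.card : ℝ) :=
  stmt_10_general r 𝒯 Fstar hFstar hopt hm N0 hN0 L hrun
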